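/- Let b ∈ (0,1), σ₀ ≠ 0, μ₀ ≠ 0, r ∈ ℝ, let w : ℝ → ℝ be continuously differentiable, and define ĝ₁₁ = 1/σ₀ + r cos²θ, ĝ₁₂ = −(σ₀/μ₀) r cos θ, ĝ₂₂ = b/μ₀ + σ₀² r/μ₀², and V̂(θ,x) = (1/σ₀)(cos θ − 1) + w(x − (μ₀/σ₀) sin θ). Then the potential matching equation (ĝ₂₂ − b cos θ ĝ₁₂) ∂V̂/∂θ + (b cos θ ĝ₁₁ − ĝ₁₂) ∂V̂/∂x = −sin θ (ĝ₁₁ ĝ₂₂ − ĝ₁₂²) holds at every point of ℝ². -/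

import Mathlib

/-!
The potential splits as `(1/σ₀)(cos θ − 1)` plus a function of `x − (μ₀/σ₀) sin θ` alone. The
coefficient vector `(ĝ₂₂ − b cos θ ĝ₁₂, b cos θ ĝ₁₁ − ĝ₁₂)` of the matching equation is proportional
to `(1, (μ₀/σ₀) cos θ)`, so it annihilates every function of `x − (μ₀/σ₀) sin θ`, and `w` drops
out. What is left is the identity `(ĝ₂₂ − b cos θ ĝ₁₂)/σ₀ = ĝ₁₁ ĝ₂₂ − ĝ₁₂²`.
-/

noncomputable section

open Real Set

/-- Partial derivative in the `θ` (first) direction. -/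
def pdth (f : ℝ × ℝ → ℝ) (p : ℝ × ℝ) : ℝ := fderiv ℝ f p (1, 0)

/-- Partial derivative in the `x` (second) direction. -/
def pdx (f : ℝ × ℝ → ℝ) (p : ℝ × ℝ) : ℝ := fderiv ℝ f p (0, 1)

open ContinuousLinearMap

lemma pdth_of_hasFDerivAt {f : ℝ × ℝ → ℝ} {p : ℝ × ℝ} {α β : ℝ}
    (hf : HasFDerivAt f (α • fst ℝ ℝ ℝ + β • snd ℝ ℝ ℝ) p) : pdth f p = α := by
  simp [pdth, hf.fderiv]

lemma pdx_of_hasFDerivAt {f : ℝ × ℝ → ℝ} {p : ℝ × ℝ} {α β : ℝ}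
    (hf : HasFDerivAt f (α • fst ℝ ℝ ℝ + β • snd ℝ ℝ ℝ) p) : pdx f p = β := by
  simp [pdx, hf.fderiv]

section PendulumPotential

variable (a c : ℝ)

def pendulumPotential (w : ℝ → ℝ) (q : ℝ × ℝ) : ℝ :=
  a * (cos q.1 - 1) + w (q.2 - c * sin q.1)

variable {w : ℝ → ℝ} (p : ℝ × ℝ)

lemma hasFDerivAt_pendulumPotential (hw : DifferentiableAt ℝ w (p.2 - c * sin p.1)) :
    HasFDerivAt (pendulumPotential a c w)
      ((-a * sin p.1 - c * cos p.1 * deriv w (p.2 - c * sin p.1)) • fst ℝ ℝ ℝ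
        + deriv w (p.2 - c * sin p.1) • snd ℝ ℝ ℝ) p := by
  have hfst : HasFDerivAt (Prod.fst : ℝ × ℝ → ℝ) (fst ℝ ℝ ℝ) p := hasFDerivAt_fst
  have hcos := (hasDerivAt_cos p.1).comp_hasFDerivAt p hfst
  have hsin := (hasDerivAt_sin p.1).comp_hasFDerivAt p hfst
  have hw' := hw.hasDerivAt.comp_hasFDerivAt p (hasFDerivAt_snd.sub (hsin.const_mul c))
  refine (((hcos.sub_const 1).const_mul a).add hw').congr_fderiv ?_
  ext <;> simp; ring

lemma pdth_pendulumPotential (hw : DifferentiableAt ℝ w (p.2 - c * sin p.1)) :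
    pdth (pendulumPotential a c w) p
      = -a * sin p.1 - c * cos p.1 * deriv w (p.2 - c * sin p.1) :=
  pdth_of_hasFDerivAt (hasFDerivAt_pendulumPotential a c p hw)

lemma pdx_pendulumPotential (hw : DifferentiableAt ℝ w (p.2 - c * sin p.1)) :
    pdx (pendulumPotential a c w) p = deriv w (p.2 - c * sin p.1) :=
  pdx_of_hasFDerivAt (hasFDerivAt_pendulumPotential a c p hw)

end PendulumPotential

section ControlledMetric

variable {b σ₀ μ₀ r : ℝ} {g11 g12 g22 C : ℝ}

lemma matching_coeff_x_eq (hσ₀ : σ₀ ≠ 0) (hμ₀ : μ₀ ≠ 0)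
    (hg11 : g11 = 1 / σ₀ + r * C ^ 2)
    (hg12 : g12 = -(σ₀ / μ₀) * r * C) (hg22 : g22 = b / μ₀ + σ₀ ^ 2 * r / μ₀ ^ 2) :
    b * C * g11 - g12 = (μ₀ / σ₀) * C * (g22 - b * C * g12) := by
  subst hg11 hg12 hg22
  field_simp
  ring

lemma matching_coeff_θ_div_eq_det (hσ₀ : σ₀ ≠ 0) (hμ₀ : μ₀ ≠ 0)
    (hg11 : g11 = 1 / σ₀ + r * C ^ 2)
    (hg12 : g12 = -(σ₀ / μ₀) * r * C) (hg22 : g22 = b / μ₀ + σ₀ ^ 2 * r / μ₀ ^ 2) :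
    (g22 - b * C * g12) / σ₀ = g11 * g22 - g12 ^ 2 := by
  subst hg11 hg12 hg22
  field_simp
  ring

end ControlledMetric

theorem statement9 (b σ₀ μ₀ r : ℝ)
    (hσ₀ : σ₀ ≠ 0) (hμ₀ : μ₀ ≠ 0)
    (w : ℝ → ℝ) (hw : ContDiff ℝ 1 w)
    (g11 g12 g22 V : ℝ × ℝ → ℝ)
    (hg11 : ∀ p : ℝ × ℝ, g11 p = 1 / σ₀ + r * Real.cos p.1 ^ 2)
    (hg12 : ∀ p : ℝ × ℝ, g12 p = -(σ₀ / μ₀) * r * Real.cos p.1)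
    (hg22 : ∀ p : ℝ × ℝ, g22 p = b / μ₀ + σ₀ ^ 2 * r / μ₀ ^ 2)
    (hV : ∀ p : ℝ × ℝ, V p =
      (1 / σ₀) * (Real.cos p.1 - 1) + w (p.2 - (μ₀ / σ₀) * Real.sin p.1)) :
    ∀ p : ℝ × ℝ,
      (g22 p - b * Real.cos p.1 * g12 p) * pdth V p
        + (b * Real.cos p.1 * g11 p - g12 p) * pdx V p
      = -Real.sin p.1 * (g11 p * g22 p - g12 p ^ 2) := by
  intro p
  have hVeq : V = pendulumPotential (1 / σ₀) (μ₀ / σ₀) w := funext hV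
  have hwp := (hw.differentiable one_ne_zero).differentiableAt (x := p.2 - μ₀ / σ₀ * sin p.1)
  rw [hVeq, pdth_pendulumPotential _ _ _ hwp, pdx_pendulumPotential _ _ _ hwp,
    matching_coeff_x_eq hσ₀ hμ₀ (hg11 p) (hg12 p) (hg22 p),
    ← matching_coeff_θ_div_eq_det hσ₀ hμ₀ (hg11 p) (hg12 p) (hg22 p)]
  ring
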